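/- NID is not approximable from above: there is no computable function f(x,y,s), nonincreasing in s, with lim_{s→∞} f(x,y,s) = NID(x,y) for all strings x, y. -/

import Mathlib

/-- A universal prefix machine: a partial computable binary function
(program, condition) ↦ output, whose domain is prefix-free in the program
argument, which outputs every string from some program, and which is
optimal (universal) among all partial computable prefix machines. -/
structure PrefixUMachine where
  eval : List Bool → List Bool → Part (List Bool)
  partrec : Partrec fun p : List Bool × List Bool => eval p.1 p.2
  prefixFree : ∀ y p q, (eval p y).Dom → (eval q y).Dom → p <+: q → p = q
  total : ∀ x y : List Bool, ∃ p, x ∈ eval p y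
  universal : ∀ M : List Bool → List Bool → Part (List Bool),
      Partrec (fun p : List Bool × List Bool => M p.1 p.2) →
      (∀ y p q, (M p y).Dom → (M q y).Dom → p <+: q → p = q) →
      ∃ c, ∀ x y p, x ∈ M p y → ∃ q, x ∈ eval q y ∧ q.length ≤ p.length + c

namespace PrefixUMachine

/-- Conditional prefix-free Kolmogorov complexity `K(x|y)`. -/
noncomputable def KC (U : PrefixUMachine) (x y : List Bool) : ℕ :=
  sInf {n | ∃ p, p.length = n ∧ x ∈ U.eval p y}

/-- (Unconditional) prefix-free Kolmogorov complexity `K(x)` (empty condition). -/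
noncomputable def K (U : PrefixUMachine) (x : List Bool) : ℕ := U.KC x []

/-- The normalized information distance
`NID(x,y) = max{K(x|y),K(y|x)} / max{K(x),K(y)}`. -/
noncomputable def NID (U : PrefixUMachine) (x y : List Bool) : ℚ :=
  (max (U.KC x y) (U.KC y x) : ℚ) / (max (U.K x) (U.K y) : ℚ)

theorem exists_min (U : PrefixUMachine) (x y : List Bool) :
    ∃ p, x ∈ U.eval p y ∧ p.length = U.KC x y := by
  obtain ⟨p, hp⟩ := U.total x y
  have h : U.KC x y ∈ {n | ∃ p, p.length = n ∧ x ∈ U.eval p y} :=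
    Nat.sInf_mem ⟨p.length, p, rfl, hp⟩
  obtain ⟨q, hq1, hq2⟩ := h
  exact ⟨q, hq2, hq1⟩

/-- A canonical shortest program `x*` for `x`. -/
noncomputable def star (U : PrefixUMachine) (x : List Bool) : List Bool :=
  (exists_min U x []).choose

/-- A computable injective pairing of binary strings. -/
def pairStr (x y : List Bool) : List Bool := (x.flatMap fun b => [true, b]) ++ false :: y

/-- A set of strings is computably enumerable. -/
def CEStr (A : Set (List Bool)) : Prop :=
  ∃ f : List Bool →. Unit, Partrec f ∧ ∀ x, x ∈ A ↔ (f x).Dom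

/-- A set of pairs of strings is computably enumerable. -/
def CEPair (A : Set (List Bool × List Bool)) : Prop :=
  ∃ f : List Bool × List Bool →. Unit, Partrec f ∧ ∀ x, x ∈ A ↔ (f x).Dom

end PrefixUMachine

open PrefixUMachine

/-!
Since `1 ≤ K(x|x) ≤ c`, `NID(x,x) = K(x|x)/K(x)` lies between `1/K(x)` and `c/K(x)`. Given an
upper approximation `f` of `NID`, search for each `n` a string `x` and a stage `s` with
`f(x,x,s) < 1/(n+1)`. Such a pair exists because `K` is unbounded, and the `x` found satisfies
`1/K(x) ≤ NID(x,x) ≤ f(x,x,s) < 1/(n+1)`, i.e. `K(x) > n + 1`. So `n ↦ x` computes strings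
`h n` with `K(h n) ≥ n`, which is impossible: the prefix-free program `0^m 1` can be decoded to
`h (2 m)`, so `2 m ≤ K(h (2 m)) ≤ m + O(1)`.
-/

open Encodable Denumerable

namespace Computable

variable {α β : Type*} [Primcodable α] [Primcodable β]

theorem nat_find {p : α → ℕ → Prop} [∀ a, DecidablePred (p a)]
    (hp : Computable₂ fun a n => decide (p a n)) (h : ∀ a, ∃ n, p a n) :
    Computable fun a => Nat.find (h a) :=
  (Partrec.rfind hp.partrec₂).of_eq_tot fun a =>
    Nat.mem_rfind.2
      ⟨by simpa using Nat.find_spec (h a), fun hm => by simpa using Nat.find_min (h a) hm⟩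

theorem exists_of_forall_exists {p : α → β → Prop} [∀ a b, Decidable (p a b)]
    (hp : Computable₂ fun a b => decide (p a b)) (h : ∀ a, ∃ b, p a b) :
    ∃ g : α → β, Computable g ∧ ∀ a, p a (g a) := by
  set c : α → ℕ → Option β := fun a n =>
    (decode (α := β) n).bind fun b => bif decide (p a b) then some b else none
  have hc : Computable₂ c :=
    (option_bind (Computable.decode.comp snd)
      (cond (hp.comp (fst.comp fst) snd) (option_some.comp snd) (const none)).to₂).to₂
  have hdom : ∀ a, (Nat.rfindOpt (c a)).Dom := fun a => by
    obtain ⟨b, hb⟩ := h a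
    exact Nat.rfindOpt_dom.2 ⟨encode b, b, by simp [c, hb]⟩
  refine ⟨fun a => (Nat.rfindOpt (c a)).get (hdom a),
    (Partrec.rfindOpt hc).of_eq_tot fun a => Part.get_mem _, fun a => ?_⟩
  obtain ⟨n, hn⟩ := Nat.rfindOpt_spec (Part.get_mem (hdom a))
  simp only [c, Option.mem_def, Option.bind_eq_some_iff] at hn
  obtain ⟨b, -, hb⟩ := hn
  cases hpb : decide (p a b) <;> simp only [hpb, cond_false, cond_true, reduceCtorEq,
    Option.some.injEq] at hb
  exact (congrArg (p a) hb).mp (of_decide_eq_true hpb)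

end Computable

open Computable in
theorem Nat.Subtype.computable_ofNat (s : Set ℕ) [DecidablePred (· ∈ s)] [Infinite s]
    (hs : Computable fun n => decide (n ∈ s)) :
    Computable fun n => (Nat.Subtype.ofNat s n : ℕ) := by
  have hinf : s.Infinite := Set.infinite_coe_iff.1 ‹_›
  have hgap (x : ℕ) : ∃ m, x + m + 1 ∈ s := by
    obtain ⟨b, hb, hxb⟩ := hinf.exists_gt x
    exact ⟨b - x - 1, by rwa [show x + (b - x - 1) + 1 = b by omega]⟩
  have hnext : Computable fun x => x + Nat.find (hgap x) + 1 :=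
    (Primrec.nat_add.to_comp.comp (Primrec.nat_add.to_comp.comp Computable.id
      (nat_find (hs.comp (_root_.Primrec.succ.to_comp.comp Primrec.nat_add.to_comp)).to₂ hgap))
      (const 1))
  -- `⊥ : s` and `Nat.Subtype.succ` are these very `Nat.find` searches
  refine (nat_rec Computable.id (const (Nat.find hinf.nonempty))
    (hnext.comp (snd.comp snd)).to₂).of_eq fun n => ?_
  induction n with
  | zero => rfl
  | succ n ih => exact congrArg (fun x => x + Nat.find (hgap x) + 1) ih

theorem Int.primrec_toNat : Primrec Int.toNat :=
  (Primrec.cond (Primrec.nat_bodd.comp .encode) (.const 0) (Primrec.nat_div2.comp .encode)).of_eq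
    fun z => by
      cases z with
      | ofNat n => rw [show encode (Int.ofNat n) = 2 * n from rfl]; simp
      | negSucc n => rw [show encode (Int.negSucc n) = 2 * n + 1 from rfl]; simp

theorem Int.primrec_natAbs : Primrec Int.natAbs :=
  (Primrec.nat_div2.comp (Primrec.succ.comp .encode)).of_eq fun z => by
    cases z with
    | ofNat n => rw [show encode (Int.ofNat n) = 2 * n from rfl]; simp
    | negSucc n => rw [show encode (Int.negSucc n) = 2 * n + 1 from rfl]; simp

theorem Nat.gcd_eq_findGreatest (a b : ℕ) :
    a.gcd b = Nat.findGreatest (fun d => d ∣ a ∧ d ∣ b) (a + b) := by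
  symm
  refine Nat.findGreatest_eq_iff.2 ⟨?_, fun _ => ⟨a.gcd_dvd_left b, a.gcd_dvd_right b⟩, ?_⟩
  · rcases a.eq_zero_or_pos with rfl | ha
    · simp
    · exact (Nat.gcd_le_left b ha).trans (Nat.le_add_right a b)
  · rintro d hgd hd ⟨hda, hdb⟩
    rcases (a.gcd b).eq_zero_or_pos with h0 | hpos
    · obtain ⟨rfl, rfl⟩ := Nat.gcd_eq_zero_iff.1 h0
      omega
    · exact absurd (Nat.le_of_dvd hpos (Nat.dvd_gcd hda hdb)) (not_le.2 hgd)

theorem Nat.primrecRel_dvd : PrimrecRel (fun a b : ℕ => a ∣ b) :=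
  (PrimrecRel.comp Primrec.eq (Primrec.nat_mod.comp .snd .fst) (.const 0)).of_eq
    fun _ => Nat.dvd_iff_mod_eq_zero.symm

theorem Nat.primrec_gcd : Primrec₂ Nat.gcd :=
  (Primrec.nat_findGreatest (p := fun (x : ℕ × ℕ) d => d ∣ x.1 ∧ d ∣ x.2) Primrec.nat_add
    ((Nat.primrecRel_dvd.comp .snd (Primrec.fst.comp .fst)).and
      (Nat.primrecRel_dvd.comp .snd (Primrec.snd.comp .fst)))).to₂.of_eq
    fun a b => (Nat.gcd_eq_findGreatest a b).symm

namespace Rat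

theorem encode_eq_pair (q : ℚ) : encode q = Nat.pair (encode q.num) q.den := rfl

theorem mem_range_encode_iff (m : ℕ) :
    m ∈ Set.range (encode : ℚ → ℕ) ↔
      0 < m.unpair.2 ∧ (ofNat ℤ m.unpair.1).natAbs.Coprime m.unpair.2 := by
  constructor
  · rintro ⟨q, rfl⟩
    rw [encode_eq_pair, Nat.unpair_pair, ofNat_encode]
    exact ⟨q.pos, q.reduced⟩
  · rintro ⟨hpos, hcop⟩
    refine ⟨Rat.mk' (ofNat ℤ m.unpair.1) m.unpair.2 hpos.ne' hcop, ?_⟩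
    rw [encode_eq_pair, encode_ofNat, Nat.pair_unpair]

theorem primrecPred_mem_range_encode : PrimrecPred (· ∈ Set.range (encode : ℚ → ℕ)) :=
  ((Primrec.nat_lt.comp (.const 0) (Primrec.snd.comp .unpair)).and
    (Primrec.eq.comp (Nat.primrec_gcd.comp
      (Int.primrec_natAbs.comp ((Primrec.ofNat ℤ).comp (Primrec.fst.comp .unpair)))
      (Primrec.snd.comp .unpair)) (.const 1))).of_eq
    fun m => (mem_range_encode_iff m).symm

/-- `encode : ℚ → ℕ` is the `(num, den)` code of `Rat.instEncodable`, whereas the `Primcodable ℚ`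
instance numbers a rational by the rank of this code among all codes
(`Denumerable.ofEncodableOfInfinite`); the two are related by `Nat.Subtype.ofNat`. -/
theorem computable_encode : Computable (encode : ℚ → ℕ) := by
  let _ := decidableRangeEncode ℚ
  have : Infinite (Set.range (encode : ℚ → ℕ)) :=
    Infinite.of_injective _ (Equiv.ofInjective _ encode_injective).injective
  refine ((Nat.Subtype.computable_ofNat _ primrecPred_mem_range_encode.decide.to_comp).comp
    Computable.encode).of_eq fun q => ?_
  calc _ = (equivRangeEncode ℚ (ofNat ℚ (@encode ℚ Primcodable.toEncodable q)) : ℕ) :=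
        (congrArg Subtype.val ((equivRangeEncode ℚ).apply_symm_apply _)).symm
    _ = encode q := by rw [ofNat_encode]; rfl

theorem computable_num : Computable Rat.num :=
  ((Computable.ofNat ℤ).comp
    (Computable.fst.comp (Primrec.unpair.to_comp.comp computable_encode))).of_eq
    fun q => by simp only [encode_eq_pair, Nat.unpair_pair, ofNat_encode]

theorem computable_den : Computable Rat.den :=
  (Computable.snd.comp (Primrec.unpair.to_comp.comp computable_encode)).of_eq
    fun q => by simp only [encode_eq_pair, Nat.unpair_pair]

theorem lt_one_div_succ_iff (q : ℚ) (n : ℕ) :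
    q < 1 / ((n : ℚ) + 1) ↔ q.num.toNat * (n + 1) < q.den := by
  have hq : q * (n + 1) < 1 ↔ q.num * (n + 1) < q.den := by
    conv_lhs => rw [← Rat.num_div_den q]
    rw [div_mul_eq_mul_div, div_lt_one (by exact_mod_cast q.pos)]
    exact_mod_cast Iff.rfl
  rw [lt_div_iff₀ (by positivity), hq]
  rcases le_or_gt 0 q.num with hnum | hnum
  · zify
    rw [Int.toNat_of_nonneg hnum]
  · refine iff_of_true ?_ ?_
    · nlinarith [q.pos]
    · simp [Int.toNat_of_nonpos hnum.le, q.pos]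

theorem computable_lt_one_div_succ :
    Computable₂ fun (n : ℕ) (q : ℚ) => decide (q < 1 / ((n : ℚ) + 1)) :=
  (Primrec.nat_lt.decide.to_comp.comp
    (Primrec.nat_mul.to_comp.comp (Int.primrec_toNat.to_comp.comp (computable_num.comp .snd))
      (Primrec.succ.to_comp.comp .fst))
    (computable_den.comp .snd)).of_eq fun x => by simp only [lt_one_div_succ_iff]

end Rat

theorem Antitone.le_of_forall_abs_sub_lt {α : Type*} [Field α] [LinearOrder α]
    [IsStrictOrderedRing α] {u : ℕ → α} {L : α} (hu : Antitone u)
    (hL : ∀ ε, 0 < ε → ∃ s, ∀ t, s ≤ t → |u t - L| < ε) (s : ℕ) : L ≤ u s := by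
  by_contra! hlt
  obtain ⟨s₀, hs₀⟩ := hL (L - u s) (sub_pos.2 hlt)
  have hclose := (abs_lt.1 (hs₀ (max s₀ s) (le_max_left _ _))).1
  have hmono := hu (le_max_right s₀ s)
  linarith

def unaryCode (m : ℕ) : List Bool := List.replicate m false ++ [true]

theorem length_unaryCode (m : ℕ) : (unaryCode m).length = m + 1 := by
  simp [unaryCode]

theorem eq_of_unaryCode_prefix {m m' : ℕ} (h : unaryCode m <+: unaryCode m') : m = m' := by
  have hle : m ≤ m' := by simpa [length_unaryCode] using h.length_le
  refine hle.antisymm (not_lt.1 fun hlt => ?_)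
  have := h.getElem (i := m) (by simp [length_unaryCode])
  simp [unaryCode, hlt] at this

theorem primrec_unaryCode : Primrec unaryCode :=
  (Primrec.list_append.comp ((Primrec.list_map Primrec.list_range (Primrec.const false).to₂).of_eq
    fun m => by simp) (Primrec.const [true]))

namespace PrefixUMachine

variable (U : PrefixUMachine)

theorem KC_le_length {x y p : List Bool} (h : x ∈ U.eval p y) : U.KC x y ≤ p.length :=
  Nat.sInf_le ⟨p, rfl, h⟩

theorem one_le_KC (x y : List Bool) : 1 ≤ U.KC x y := by
  obtain ⟨p, hp, hlen⟩ := U.exists_min x y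
  by_contra! h0
  obtain rfl : p = [] := List.length_eq_zero_iff.1 (by omega)
  obtain ⟨q, hq⟩ := U.total (true :: x) y
  obtain rfl := U.prefixFree y [] q (Part.dom_iff_mem.2 ⟨_, hp⟩)
    (Part.dom_iff_mem.2 ⟨_, hq⟩) List.nil_prefix
  simpa using Part.mem_unique hq hp

theorem exists_lt_K (n : ℕ) : ∃ x, n < U.K x := by
  have hstar (x : List Bool) : x ∈ U.eval (U.star x) [] ∧ (U.star x).length = U.K x :=
    (U.exists_min x []).choose_spec
  have hfin : {x | U.K x ≤ n}.Finite :=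
    .of_injOn (f := U.star) (t := {p | p.length ≤ n})
      (fun x hx => by simpa [(hstar x).2] using hx)
      (fun x _ x' _ he => Part.mem_unique (hstar x).1 (he ▸ (hstar x').1))
      (List.finite_length_le Bool n)
  obtain ⟨x, hx⟩ := hfin.infinite_compl.nonempty
  exact ⟨x, not_le.1 hx⟩

theorem exists_KC_le_of_prefixFree {C : List Bool → Prop} [DecidablePred C]
    (hC : Computable fun p => decide (C p)) (hpf : ∀ p q, C p → C q → p <+: q → p = q)
    {g : List Bool → List Bool → List Bool} (hg : Computable₂ g) :
    ∃ c, ∀ p y, C p → U.KC (g p y) y ≤ p.length + c := by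
  let M : List Bool → List Bool → Part (List Bool) := fun p y =>
    bif decide (C p) then Part.some (g p y) else Part.none
  have hM : Partrec fun py : List Bool × List Bool => M py.1 py.2 :=
    Partrec.cond (hC.comp .fst) hg.partrec Partrec.none
  have hdom (p y) (h : (M p y).Dom) : C p := by
    by_contra hCp
    simp [M, hCp] at h
  obtain ⟨c, hc⟩ := U.universal M hM fun y p q hp hq => hpf p q (hdom p y hp) (hdom q y hq)
  refine ⟨c, fun p y hp => ?_⟩
  obtain ⟨q, hq, hlen⟩ := hc (g p y) y p (by simp [M, hp])
  exact (U.KC_le_length hq).trans hlen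

theorem exists_KC_self_le : ∃ c, ∀ x, U.KC x x ≤ c := by
  obtain ⟨c, hc⟩ := U.exists_KC_le_of_prefixFree (C := (· = []))
    (Primrec.eq.comp .id (.const [])).decide.to_comp (by rintro p q rfl rfl -; rfl)
    (g := fun _ y => y) Computable.snd
  exact ⟨c, fun x => by simpa using hc [] x rfl⟩

theorem not_forall_le_K_of_computable {h : ℕ → List Bool} (hh : Computable h) :
    ¬ ∀ n, n ≤ U.K (h n) := by
  intro hK
  obtain ⟨c, hc⟩ := U.exists_KC_le_of_prefixFree (C := fun p => p = unaryCode (p.length - 1))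
    (Primrec.eq.comp .id
      (primrec_unaryCode.comp (Primrec.nat_sub.comp .list_length (.const 1)))).decide.to_comp
    (by
      rintro p q (hp : p = _) (hq : q = _) hpq
      rw [hp, hq] at hpq ⊢
      rw [eq_of_unaryCode_prefix hpq])
    (g := fun p _ => h (2 * (p.length - 1)))
    (hh.comp ((Primrec.nat_mul.comp (.const 2)
      (Primrec.nat_sub.comp .list_length (.const 1))).comp .fst).to_comp).to₂
  have := (hK _).trans (hc (unaryCode (c + 2)) [] (by simp [length_unaryCode]))
  simp [length_unaryCode] at this
  omega

theorem NID_self (x : List Bool) : U.NID x x = U.KC x x / U.K x := by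
  simp only [NID, max_self]

theorem K_pos (x : List Bool) : (0 : ℚ) < U.K x := by
  exact_mod_cast U.one_le_KC x []

theorem one_div_K_le_NID_self (x : List Bool) : 1 / (U.K x : ℚ) ≤ U.NID x x := by
  rw [NID_self]
  gcongr
  exact_mod_cast U.one_le_KC x x

theorem lt_K_of_NID_self_lt {x : List Bool} {n : ℕ} (h : U.NID x x < 1 / ((n : ℚ) + 1)) :
    n + 1 < U.K x := by
  have := (U.one_div_K_le_NID_self x).trans_lt h
  rw [one_div_lt_one_div (U.K_pos x) (by positivity)] at this
  exact_mod_cast this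

theorem exists_NID_self_lt {ε : ℚ} (hε : 0 < ε) : ∃ x, U.NID x x < ε := by
  obtain ⟨c, hc⟩ := U.exists_KC_self_le
  obtain ⟨n, hn⟩ := exists_nat_gt (c / ε)
  obtain ⟨x, hx⟩ := U.exists_lt_K n
  refine ⟨x, ?_⟩
  rw [NID_self, div_lt_iff₀ (U.K_pos x)]
  have hKx : (n : ℚ) < U.K x := by exact_mod_cast hx
  have hcx : (U.KC x x : ℚ) ≤ c := by exact_mod_cast hc x
  rw [div_lt_iff₀ hε] at hn
  nlinarith

end PrefixUMachine

/-- `NID` is not approximable from above: no computable approximation that is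
nonincreasing in the stage converges to `NID`. -/
theorem nid_not_pi1 (U : PrefixUMachine) :
    ¬ ∃ f : List Bool → List Bool → ℕ → ℚ,
      Computable (fun q : (List Bool × List Bool) × ℕ => f q.1.1 q.1.2 q.2) ∧
      ∀ x y : List Bool, Antitone (f x y) ∧
        ∀ ε : ℚ, 0 < ε → ∃ s, ∀ t, s ≤ t → |f x y t - U.NID x y| < ε := by
  rintro ⟨f, hfC, hf⟩
  have hsmall (n : ℕ) : ∃ xs : List Bool × ℕ, f xs.1 xs.1 xs.2 < 1 / ((n : ℚ) + 1) := by
    obtain ⟨x, hx⟩ := U.exists_NID_self_lt (ε := 1 / ((n : ℚ) + 1)) (by positivity)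
    obtain ⟨s, hs⟩ := (hf x x).2 _ (sub_pos.2 hx)
    exact ⟨(x, s), by linarith [(abs_lt.1 (hs s le_rfl)).2]⟩
  have hsearch : Computable₂ fun (n : ℕ) (xs : List Bool × ℕ) =>
      decide (f xs.1 xs.1 xs.2 < 1 / ((n : ℚ) + 1)) := by
    have hval : Computable fun p : ℕ × (List Bool × ℕ) => f p.2.1 p.2.1 p.2.2 :=
      Computable.comp (g := fun p : ℕ × (List Bool × ℕ) => ((p.2.1, p.2.1), p.2.2)) hfC
        (((Computable.fst.comp .snd).pair (Computable.fst.comp .snd)).pair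
          (Computable.snd.comp .snd))
    exact Rat.computable_lt_one_div_succ.comp Computable.fst hval
  obtain ⟨g, hgC, hg⟩ := Computable.exists_of_forall_exists hsearch hsmall
  refine U.not_forall_le_K_of_computable (Computable.fst.comp hgC) fun n => ?_
  have hNID := ((hf _ _).1.le_of_forall_abs_sub_lt (hf _ _).2 (g n).2).trans_lt (hg n)
  exact (U.lt_K_of_NID_self_lt hNID).le.trans' (Nat.le_succ n)
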